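/- Let P be an orthogonal projector and M a matrix of compatible size. Then for every integer q ≥ 0, ‖P M‖_2 ≤ ‖P (M M^T)^q M‖_2^{1/(2q+1)}. -/

import Mathlib

open Matrix MeasureTheory ProbabilityTheory

noncomputable def spec {m n : ℕ} (A : Matrix (Fin m) (Fin n) ℝ) : ℝ :=
  ‖LinearMap.toContinuousLinearMap (Matrix.toEuclideanLin A)‖

noncomputable def eigDesc {n : ℕ} {M : Matrix (Fin n) (Fin n) ℝ} (hM : M.IsHermitian)
    (j : Fin n) : ℝ :=
  hM.eigenvalues (Tuple.sort hM.eigenvalues j.rev)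

noncomputable def svDesc {m n : ℕ} (A : Matrix (Fin m) (Fin n) ℝ) (j : Fin n) : ℝ :=
  Real.sqrt (eigDesc (Matrix.isHermitian_conjTranspose_mul_self A) j)

noncomputable def sqrtM {n : ℕ} {M : Matrix (Fin n) (Fin n) ℝ} (hM : M.PosDef) :
    Matrix (Fin n) (Fin n) ℝ :=
  hM.posSemidef.1.eigenvectorUnitary.1 * diagonal ((↑) ∘ (√·) ∘ hM.posSemidef.1.eigenvalues) *
    (star hM.posSemidef.1.eigenvectorUnitary : Matrix (Fin n) (Fin n) ℝ)

def IsMoorePenrose {m n : ℕ} (A : Matrix (Fin m) (Fin n) ℝ)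
    (B : Matrix (Fin n) (Fin m) ℝ) : Prop :=
  A * B * A = A ∧ B * A * B = B ∧ (A * B)ᵀ = A * B ∧ (B * A)ᵀ = B * A

/-!
Passing to adjoints, `‖P M‖ = ‖Mᵀ P‖` and `‖P (M Mᵀ)^q M‖ = ‖Mᵀ (M Mᵀ)^q P‖`, so since `‖P u‖ ≤ ‖u‖`
it suffices to show `‖Mᵀ v‖^(2q+1) ≤ ‖v‖^(2q) ‖Mᵀ (M Mᵀ)^q v‖`. By Cauchy–Schwarz,
`‖T x‖² = ⟪x, T† T x⟫ ≤ ‖x‖ ‖T† T x‖`, so the norms `a₀, a₁, a₂, …` of `v, Mᵀ v, M Mᵀ v, …`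
form a log-convex sequence, and log-convexity gives `a₁^(k+1) ≤ a₀^k a_(k+1)`.
-/

section LogConvexSequence

variable {a : ℕ → ℝ}

theorem apply_one_mul_le_of_sq_le_mul (hnonneg : ∀ n, 0 ≤ a n)
    (hconv : ∀ n, a (n + 1) ^ 2 ≤ a n * a (n + 2)) (n : ℕ) :
    a 1 * a (n + 1) ≤ a 0 * a (n + 2) := by
  induction n with
  | zero => simpa [sq] using hconv 0
  | succ n ih =>
    rcases (hnonneg (n + 2)).eq_or_lt with hzero | hpos
    · rw [← hzero, mul_zero]
      exact mul_nonneg (hnonneg 0) (hnonneg (n + 3))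
    · refine le_of_mul_le_mul_right ?_ hpos
      calc a 1 * a (n + 2) * a (n + 2) = a 1 * a (n + 2) ^ 2 := by ring
        _ ≤ a 1 * (a (n + 1) * a (n + 3)) := by gcongr; exacts [hnonneg 1, hconv (n + 1)]
        _ = a 1 * a (n + 1) * a (n + 3) := by ring
        _ ≤ a 0 * a (n + 2) * a (n + 3) := by gcongr; exact hnonneg _
        _ = a 0 * a (n + 3) * a (n + 2) := by ring

theorem apply_one_pow_le_of_sq_le_mul (hnonneg : ∀ n, 0 ≤ a n)
    (hconv : ∀ n, a (n + 1) ^ 2 ≤ a n * a (n + 2)) (n : ℕ) :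
    a 1 ^ (n + 1) ≤ a 0 ^ n * a (n + 1) := by
  induction n with
  | zero => simp
  | succ n ih =>
    calc a 1 ^ (n + 2) = a 1 * a 1 ^ (n + 1) := by ring
      _ ≤ a 1 * (a 0 ^ n * a (n + 1)) := by gcongr; exact hnonneg 1
      _ = a 0 ^ n * (a 1 * a (n + 1)) := by ring
      _ ≤ a 0 ^ n * (a 0 * a (n + 2)) :=
        mul_le_mul_of_nonneg_left (apply_one_mul_le_of_sq_le_mul hnonneg hconv n)
          (pow_nonneg (hnonneg 0) n)
      _ = a 0 ^ (n + 1) * a (n + 2) := by ring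

end LogConvexSequence

theorem ContinuousLinearMap.opNorm_le_rpow_of_pow_le {𝕜 E F : Type*} [NontriviallyNormedField 𝕜]
    [SeminormedAddCommGroup E] [SeminormedAddCommGroup F] [NormedSpace 𝕜 E] [NormedSpace 𝕜 F]
    {T : E →L[𝕜] F} {C : ℝ} (hC : 0 ≤ C) {k : ℕ} (hk : k ≠ 0)
    (h : ∀ x, ‖T x‖ ^ k ≤ C * ‖x‖ ^ k) : ‖T‖ ≤ C ^ (k⁻¹ : ℝ) := by
  refine T.opNorm_le_bound (by positivity) fun x ↦ ?_
  calc ‖T x‖ = (‖T x‖ ^ k) ^ (k⁻¹ : ℝ) := (Real.pow_rpow_inv_natCast (norm_nonneg _) hk).symm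
    _ ≤ (C * ‖x‖ ^ k) ^ (k⁻¹ : ℝ) := by gcongr; exact h x
    _ = C ^ (k⁻¹ : ℝ) * ‖x‖ := by
      rw [Real.mul_rpow hC (by positivity), Real.pow_rpow_inv_natCast (norm_nonneg _) hk]

section HilbertSpace

open scoped InnerProduct

variable {𝕜 E F : Type*} [RCLike 𝕜] [NormedAddCommGroup E] [InnerProductSpace 𝕜 E]
  [CompleteSpace E] [NormedAddCommGroup F] [InnerProductSpace 𝕜 F] [CompleteSpace F]

namespace ContinuousLinearMap

theorem norm_apply_sq_le_norm_mul_norm_adjoint_comp_self_apply (T : E →L[𝕜] F) (x : E) :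
    ‖T x‖ ^ 2 ≤ ‖x‖ * ‖(T† ∘L T) x‖ := by
  rw [apply_norm_sq_eq_inner_adjoint_right]
  exact re_inner_le_norm _ _

/-- The norms of `v, T v, T† T v, T T† T v, …`. -/
noncomputable def zigzagNorm (T : E →L[𝕜] F) : E → ℕ → ℝ
  | v, 0 => ‖v‖
  | v, 1 => ‖T v‖
  | v, n + 2 => zigzagNorm T ((T† ∘L T) v) n

theorem zigzagNorm_nonneg (T : E →L[𝕜] F) (v : E) : ∀ n, 0 ≤ zigzagNorm T v n
  | 0 => norm_nonneg v
  | 1 => norm_nonneg (T v)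
  | n + 2 => zigzagNorm_nonneg T _ n

theorem zigzagNorm_sq_le (T : E →L[𝕜] F) (v : E) :
    ∀ n, zigzagNorm T v (n + 1) ^ 2 ≤ zigzagNorm T v n * zigzagNorm T v (n + 2)
  | 0 => norm_apply_sq_le_norm_mul_norm_adjoint_comp_self_apply T v
  | 1 => by
    simpa [zigzagNorm, adjoint_adjoint] using
      norm_apply_sq_le_norm_mul_norm_adjoint_comp_self_apply (T†) (T v)
  | n + 2 => zigzagNorm_sq_le T _ n

theorem zigzagNorm_two_mul_add_one (T : E →L[𝕜] F) (v : E) (q : ℕ) :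
    zigzagNorm T v (2 * q + 1) = ‖T (((T† ∘L T) ^ q) v)‖ := by
  induction q generalizing v with
  | zero => rfl
  | succ q ih => rw [pow_succ]; exact ih _

theorem norm_apply_pow_two_mul_add_one_le (T : E →L[𝕜] F) (v : E) (q : ℕ) :
    ‖T v‖ ^ (2 * q + 1) ≤ ‖v‖ ^ (2 * q) * ‖T (((T† ∘L T) ^ q) v)‖ := by
  rw [← zigzagNorm_two_mul_add_one]
  exact apply_one_pow_le_of_sq_le_mul (zigzagNorm_nonneg T v) (zigzagNorm_sq_le T v) (2 * q)

end ContinuousLinearMap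

open ContinuousLinearMap in
theorem IsStarProjection.norm_comp_le_norm_comp_pow_comp_rpow {p : E →L[𝕜] E} (hp : IsStarProjection p)
    (f : F →L[𝕜] E) (q : ℕ) :
    ‖p ∘L f‖ ≤ ‖p ∘L ((f ∘L f†) ^ q) ∘L f‖ ^ ((1 : ℝ) / (2 * q + 1)) := by
  have hp_adj : p† = p := hp.isSelfAdjoint
  have hS_adj : ((f ∘L f†) ^ q)† = (f ∘L f†) ^ q := by
    have : IsSelfAdjoint (f ∘L f†) := by
      rw [isSelfAdjoint_iff', adjoint_comp, adjoint_adjoint]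
    exact (this.pow q).adjoint_eq
  have hnorm_left : ‖p ∘L f‖ = ‖f† ∘L p‖ := by
    rw [← LinearIsometryEquiv.norm_map adjoint, adjoint_comp, hp_adj]
  have hnorm_right : ‖p ∘L ((f ∘L f†) ^ q) ∘L f‖ = ‖f† ∘L ((f ∘L f†) ^ q) ∘L p‖ := by
    rw [← LinearIsometryEquiv.norm_map adjoint, adjoint_comp, adjoint_comp, hp_adj, hS_adj,
      comp_assoc]
  have hexp : (1 : ℝ) / (2 * q + 1) = ((2 * q + 1 : ℕ) : ℝ)⁻¹ := by push_cast; rw [one_div]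
  rw [hnorm_left, hnorm_right, hexp]
  refine opNorm_le_rpow_of_pow_le (norm_nonneg _) (by omega) fun u ↦ ?_
  have hpu : ‖p u‖ ≤ ‖u‖ := by simpa using p.le_of_opNorm_le hp.norm_le u
  have key := norm_apply_pow_two_mul_add_one_le (f†) (p u) q
  rw [adjoint_adjoint] at key
  calc ‖(f† ∘L p) u‖ ^ (2 * q + 1) ≤ ‖p u‖ ^ (2 * q) * ‖(f†) (((f ∘L f†) ^ q) (p u))‖ := key
    _ ≤ ‖u‖ ^ (2 * q) * (‖f† ∘L ((f ∘L f†) ^ q) ∘L p‖ * ‖u‖) := by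
      gcongr
      exact (f† ∘L ((f ∘L f†) ^ q) ∘L p).le_opNorm u
    _ = ‖f† ∘L ((f ∘L f†) ^ q) ∘L p‖ * ‖u‖ ^ (2 * q + 1) := by ring

end HilbertSpace

namespace Matrix

open ContinuousLinearMap
open scoped InnerProduct

variable {𝕜 l m n : Type*} [RCLike 𝕜] [Fintype l] [Fintype m] [DecidableEq m]
  [Fintype n] [DecidableEq n]

noncomputable def toEuclideanContinuousLinearMap (A : Matrix m n 𝕜) :
    EuclideanSpace 𝕜 n →L[𝕜] EuclideanSpace 𝕜 m :=
  (toEuclideanLin A).toContinuousLinearMap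

theorem toEuclideanContinuousLinearMap_mul (A : Matrix l m 𝕜) (B : Matrix m n 𝕜) :
    toEuclideanContinuousLinearMap (A * B) =
      toEuclideanContinuousLinearMap A ∘L toEuclideanContinuousLinearMap B := by
  ext x
  simp [toEuclideanContinuousLinearMap, mulVec_mulVec]

theorem toEuclideanContinuousLinearMap_pow (A : Matrix n n 𝕜) (k : ℕ) :
    toEuclideanContinuousLinearMap (A ^ k) = toEuclideanContinuousLinearMap A ^ k := by
  induction k with
  | zero => ext x; simp [toEuclideanContinuousLinearMap]
  | succ k ih => rw [pow_succ, toEuclideanContinuousLinearMap_mul, ih, pow_succ, mul_def]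

theorem toEuclideanContinuousLinearMap_conjTranspose (A : Matrix m n 𝕜) :
    toEuclideanContinuousLinearMap Aᴴ = (toEuclideanContinuousLinearMap A)† := by
  rw [toEuclideanContinuousLinearMap, toEuclideanLin_conjTranspose_eq_adjoint,
    LinearMap.adjoint_toContinuousLinearMap]
  rfl

end Matrix

open ContinuousLinearMap in
open scoped InnerProduct in
/-- if $P$ is an orthogonal projector then for all $q \ge 0$,
$\|PM\|_2 \le \|P(MM^T)^qM\|_2^{1/(2q+1)}$. -/
theorem stmt9 {m n : ℕ} (P : Matrix (Fin m) (Fin m) ℝ)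
    (hPidem : P * P = P) (hPsym : Pᵀ = P)
    (M : Matrix (Fin m) (Fin n) ℝ) (q : ℕ) :
    spec (P * M) ≤ (spec (P * (M * Mᵀ) ^ q * M)) ^ ((1 : ℝ) / (2 * q + 1)) := by
  have hp : IsStarProjection (toEuclideanContinuousLinearMap P) := by
    refine ⟨?_, ?_⟩
    · rw [IsIdempotentElem, mul_def, ← toEuclideanContinuousLinearMap_mul, hPidem]
    · rw [IsSelfAdjoint, star_eq_adjoint, ← toEuclideanContinuousLinearMap_conjTranspose,
        conjTranspose_eq_transpose_of_trivial, hPsym]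
  have hsplit : toEuclideanContinuousLinearMap (P * (M * Mᵀ) ^ q * M) =
      toEuclideanContinuousLinearMap P ∘L ((toEuclideanContinuousLinearMap M ∘L
        (toEuclideanContinuousLinearMap M)†) ^ q) ∘L toEuclideanContinuousLinearMap M := by
    rw [← conjTranspose_eq_transpose_of_trivial]
    simp only [toEuclideanContinuousLinearMap_mul, toEuclideanContinuousLinearMap_pow,
      toEuclideanContinuousLinearMap_conjTranspose, comp_assoc]
  have hbound := hp.norm_comp_le_norm_comp_pow_comp_rpow (toEuclideanContinuousLinearMap M) q
  rwa [← toEuclideanContinuousLinearMap_mul, ← hsplit] at hbound
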